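/- Let A = (a_{ℓm}) ∈ M_n(ℍ) with n ≥ 2. Then the second-order quaternionic trace T_{ℍ,2}(A), defined as the coefficient of z² in the polynomial z ↦ det(I_{2n} − z·χ_A), satisfies T_{ℍ,2}(A) = ∑_{ℓ=1}^{n} |a_{ℓℓ}|² + 4 ∑_{ℓ=1}^{n−1} ∑_{m=ℓ+1}^{n} Re(a_{ℓℓ})Re(a_{mm}) − 2 ∑_{ℓ=1}^{n−1} ∑_{m=ℓ+1}^{n} Re(a_{mℓ}a_{ℓm}), where |q|² denotes the squared quaternionic norm and Re the real part of a quaternion. -/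

import Mathlib

open Matrix Polynomial

/-- The first complex component of a quaternion `q = α + β j`:  `α = re + imI * i`. -/
noncomputable def qC1 (q : Quaternion ℝ) : ℂ := ⟨q.re, q.imI⟩

/-- The second complex component of a quaternion `q = α + β j`:  `β = imJ + imK * i`. -/
noncomputable def qC2 (q : Quaternion ℝ) : ℂ := ⟨q.imJ, q.imK⟩

/-- The companion matrix `χ_A = [[A₁, A₂], [-conj A₂, conj A₁]]` of a quaternionic matrix
`A = A₁ + A₂ j`. -/
noncomputable def companion {n : ℕ} (A : Matrix (Fin n) (Fin n) (Quaternion ℝ)) :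
    Matrix (Fin n ⊕ Fin n) (Fin n ⊕ Fin n) ℂ :=
  Matrix.fromBlocks (A.map qC1) (A.map qC2)
    (-(A.map fun q => (starRingEnd ℂ) (qC2 q))) (A.map fun q => (starRingEnd ℂ) (qC1 q))

/-- `lam` is a family of standard eigenvalues of the quaternionic matrix `A`: each has
nonnegative imaginary part and the characteristic polynomial of `χ_A` is
`∏ k, (X - λ k) (X - conj (λ k))`. -/
noncomputable def IsStdEigenvalues {n : ℕ} (A : Matrix (Fin n) (Fin n) (Quaternion ℝ))
    (lam : Fin n → ℂ) : Prop :=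
  (∀ k, 0 ≤ (lam k).im) ∧
    (companion A).charpoly =
      ∏ k, ((X - C (lam k)) * (X - C ((starRingEnd ℂ) (lam k))))

/-- The polynomial `z ↦ det (I - z M)` of a complex square matrix `M`. -/
noncomputable def detPolySub {m : Type*} [Fintype m] [DecidableEq m] (M : Matrix m m ℂ) :
    Polynomial ℂ :=
  Matrix.det ((1 : Matrix m m (Polynomial ℂ)) - (X : Polynomial ℂ) • M.map C)

/-! Over any commutative ring, `det (1 - z M) * det (1 + z M) = det (1 - z² M²)`, and the
coefficient of `z²` in `det (1 - z M)` is unchanged under `M ↦ -M`. Comparing coefficients of `z²`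
gives `2 c₂(M) = (tr M)² - tr (M²)`. For `M = χ_A` one has `tr χ_A = 2 ∑ Re a_ℓℓ` and
`tr χ_A² = 2 ∑_{ℓ,m} Re (a_ℓm a_mℓ)`; splitting both double sums into diagonal and off-diagonal
parts, using `Re (pq) = Re (qp)` and `|q|² = 2 (Re q)² - Re (q²)`, yields the formula. -/

open Finset

namespace Matrix

variable {R n : Type*} [CommRing R] [Fintype n] [DecidableEq n]

lemma charpolyRev_smul (r : R) (M : Matrix n n R) :
    (r • M).charpolyRev = M.charpolyRev.comp (C r * X) := by
  rw [charpolyRev, charpolyRev, ← coe_compRingHom_apply, RingHom.map_det]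
  congr 1
  refine Matrix.ext fun i j => ?_
  by_cases h : i = j <;> simp [h] <;> ring

lemma coeff_charpolyRev_neg (M : Matrix n n R) (k : ℕ) :
    (-M).charpolyRev.coeff k = (-1) ^ k * M.charpolyRev.coeff k := by
  rw [← neg_one_smul R M, charpolyRev_smul, comp_C_mul_X_coeff, mul_comm]

lemma charpolyRev_mul_charpolyRev_neg (M : Matrix n n R) :
    M.charpolyRev * (-M).charpolyRev = expand R 2 (M * M).charpolyRev := by
  rw [charpolyRev, charpolyRev, charpolyRev, ← det_mul, ← AlgHom.coe_toRingHom, RingHom.map_det]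
  congr 1
  trans 1 - (X ^ 2 : R[X]) • (M * M).map C
  · rw [Matrix.map_neg _ (map_neg C), smul_neg, sub_neg_eq_add, Matrix.map_mul, pow_two,
      ← smul_mul_smul_comm]
    generalize (X : R[X]) • M.map C = N
    noncomm_ring
  · refine Matrix.ext fun i j => ?_
    by_cases h : i = j <;> simp [h, -Matrix.map_mul]

lemma two_mul_coeff_charpolyRev_two (M : Matrix n n R) :
    2 * M.charpolyRev.coeff 2 = M.trace ^ 2 - (M * M).trace := by
  have hexpand : (expand R 2 (M * M).charpolyRev).coeff 2 = -(M * M).trace := by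
    rw [← coeff_charpolyRev_eq_neg_trace]
    exact coeff_expand_mul' two_pos _ 1
  have h := congrArg (coeff · 2) (charpolyRev_mul_charpolyRev_neg M)
  simp only [coeff_mul, Nat.sum_antidiagonal_succ, Nat.antidiagonal_zero, sum_singleton,
    Nat.reduceAdd, coeff_zero_eq_eval_zero, eval_charpolyRev, coeff_charpolyRev_eq_neg_trace,
    coeff_charpolyRev_neg, hexpand] at h
  linear_combination h

end Matrix

lemma Matrix.trace_fromBlocks {l m α : Type*} [Fintype l] [Fintype m] [AddCommMonoid α]
    (P : Matrix l l α) (Q : Matrix l m α) (R : Matrix m l α) (S : Matrix m m α) :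
    (fromBlocks P Q R S).trace = P.trace + S.trace := by
  simp [trace, Fintype.sum_sum_type]

namespace Finset

variable {ι R : Type*} [LinearOrder ι] [Fintype ι] [LocallyFiniteOrderTop ι]
  [LocallyFiniteOrderBot ι]

lemma sum_sum_eq_sum_add_two_mul_sum_sum_Ioi [NonAssocSemiring R] (f : ι → ι → R)
    (hf : ∀ i j, f i j = f j i) :
    ∑ i, ∑ j, f i j = ∑ i, f i i + 2 * ∑ i, ∑ j ∈ Ioi i, f i j := by
  classical
  calc ∑ i, ∑ j, f i j = ∑ i, (f i i + ∑ j ∈ {i}ᶜ, f j i) := by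
        refine sum_congr rfl fun i _ => ?_
        rw [Fintype.sum_eq_add_sum_compl i]
        exact congrArg _ (sum_congr rfl fun j _ => hf i j)
    _ = ∑ i, f i i + ∑ i, ∑ j ∈ Ioi i, (f j i + f i j) := by
        rw [sum_add_distrib, sum_sum_Ioi_add_eq_sum_sum_off_diag]
    _ = ∑ i, f i i + 2 * ∑ i, ∑ j ∈ Ioi i, f i j := by
        simp only [mul_sum, hf _ (_ : ι), two_mul]

lemma sq_sum_eq_sum_sq_add_two_mul_sum_sum_Ioi [CommSemiring R] (x : ι → R) :
    (∑ i, x i) ^ 2 = ∑ i, x i ^ 2 + 2 * ∑ i, ∑ j ∈ Ioi i, x i * x j := by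
  rw [sq, sum_mul_sum, sum_sum_eq_sum_add_two_mul_sum_sum_Ioi _ fun _ _ => mul_comm _ _]
  simp only [sq]

end Finset

namespace Quaternion

variable {R : Type*} [CommRing R]

lemma re_mul_comm (p q : ℍ[R]) : (p * q).re = (q * p).re := by
  simp only [re_mul]
  ring

lemma normSq_eq_two_mul_re_sq_sub_re_mul_self (q : ℍ[R]) :
    normSq q = 2 * q.re ^ 2 - (q * q).re := by
  rw [normSq_def', re_mul]
  ring

end Quaternion

lemma trace_companion {n : ℕ} (A : Matrix (Fin n) (Fin n) (Quaternion ℝ)) :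
    (companion A).trace = ((2 * ∑ ℓ, (A ℓ ℓ).re : ℝ) : ℂ) := by
  rw [companion, Matrix.trace_fromBlocks, Matrix.trace, Matrix.trace, ← sum_add_distrib, mul_sum,
    Complex.ofReal_sum]
  exact sum_congr rfl fun ℓ _ => Complex.add_conj (qC1 (A ℓ ℓ))

lemma trace_companion_mul_self {n : ℕ} (A : Matrix (Fin n) (Fin n) (Quaternion ℝ)) :
    (companion A * companion A).trace = ((2 * ∑ ℓ, ∑ m, (A ℓ m * A m ℓ).re : ℝ) : ℂ) := by
  rw [companion, Matrix.fromBlocks_multiply, Matrix.trace_fromBlocks]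
  simp only [Matrix.trace, Matrix.diag_apply, Matrix.add_apply, Matrix.mul_apply]
  push_cast [mul_sum]
  simp only [← sum_add_distrib, Matrix.map_apply, Matrix.neg_apply]
  refine sum_congr rfl fun ℓ _ => sum_congr rfl fun m _ => ?_
  apply Complex.ext <;> simp [qC1, qC2, Quaternion.re_mul] <;> ring

theorem second_trace_eq_entries_general {n : ℕ}
    (A : Matrix (Fin n) (Fin n) (Quaternion ℝ)) :
    (detPolySub (companion A)).coeff 2 =
      (((∑ ℓ, Quaternion.normSq (A ℓ ℓ)) +
        4 * (∑ ℓ, ∑ m ∈ Finset.Ioi ℓ, (A ℓ ℓ).re * (A m m).re) -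
        2 * ∑ ℓ, ∑ m ∈ Finset.Ioi ℓ, (A m ℓ * A ℓ m).re : ℝ) : ℂ) := by
  have hcoeff := (companion A).two_mul_coeff_charpolyRev_two
  rw [trace_companion, trace_companion_mul_self] at hcoeff
  have hdiag := sq_sum_eq_sum_sq_add_two_mul_sum_sum_Ioi fun ℓ => (A ℓ ℓ).re
  have hoff : ∑ ℓ, ∑ m, (A ℓ m * A m ℓ).re = ∑ ℓ, (A ℓ ℓ * A ℓ ℓ).re +
      2 * ∑ ℓ, ∑ m ∈ Ioi ℓ, (A m ℓ * A ℓ m).re := by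
    rw [sum_comm]
    exact sum_sum_eq_sum_add_two_mul_sum_sum_Ioi _ fun _ _ => Quaternion.re_mul_comm _ _
  have hnormSq : ∑ ℓ, Quaternion.normSq (A ℓ ℓ) =
      2 * ∑ ℓ, (A ℓ ℓ).re ^ 2 - ∑ ℓ, (A ℓ ℓ * A ℓ ℓ).re := by
    simp only [Quaternion.normSq_eq_two_mul_re_sq_sub_re_mul_self, sum_sub_distrib, mul_sum]
  apply mul_left_cancel₀ (two_ne_zero' ℂ)
  rw [detPolySub, ← Matrix.charpolyRev, hcoeff]
  norm_cast
  rw [hnormSq]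
  linear_combination 4 * hdiag - 2 * hoff

/-- The second-order quaternionic trace of `A ∈ M_n(ℍ)`, i.e. the coefficient of `z²` in
`det(I_{2n} - z χ_A)`, expressed explicitly in terms of the entries of `A`. -/
theorem second_trace_eq_entries {n : ℕ} (hn : 2 ≤ n)
    (A : Matrix (Fin n) (Fin n) (Quaternion ℝ)) :
    (detPolySub (companion A)).coeff 2 =
      (((∑ ℓ, Quaternion.normSq (A ℓ ℓ)) +
        4 * (∑ ℓ, ∑ m ∈ Finset.Ioi ℓ, (A ℓ ℓ).re * (A m m).re) -
        2 * ∑ ℓ, ∑ m ∈ Finset.Ioi ℓ, (A m ℓ * A ℓ m).re : ℝ) : ℂ) :=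
  second_trace_eq_entries_general A
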